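/- When the theory is empty (semantical inconsistency coincides with syntactical inconsistency) and the logic is propositional (substitution acts trivially on literals), every pair (Γ, P) is safe. -/
import Mathlib


open scoped Classical

/-- Abstract structure of literals: an involutive negation (with `neg l ≠ l`),
substitution of terms for variables (commuting with negation), and free variables. -/
structure LitStr (V Tm Lit : Type) where
  neg : Lit → Lit
  neg_invol : ∀ l, neg (neg l) = l
  neg_ne : ∀ l, neg l ≠ l
  substL : Lit → V → Tm → Lit
  substL_neg : ∀ l x t, substL (neg l) x t = neg (substL l x t)
  fvL : Lit → Set V

/-- Polarised formulae. -/
inductive PForm (V Lit : Type) where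
  | lit (l : Lit)
  | andP (A B : PForm V Lit)
  | orP (A B : PForm V Lit)
  | exi (x : V) (A : PForm V Lit)
  | topP
  | botP
  | andN (A B : PForm V Lit)
  | orN (A B : PForm V Lit)
  | fa (x : V) (A : PForm V Lit)
  | topN
  | botN

namespace PForm

variable {V Tm Lit : Type}

/-- Negation of polarised formulae (De Morgan duality, swapping polarities). -/
def negF (S : LitStr V Tm Lit) : PForm V Lit → PForm V Lit
  | .lit l => .lit (S.neg l)
  | .andP A B => .orN (negF S A) (negF S B)
  | .orP A B => .andN (negF S A) (negF S B)
  | .exi x A => .fa x (negF S A)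
  | .topP => .botN
  | .botP => .topN
  | .andN A B => .orP (negF S A) (negF S B)
  | .orN A B => .andP (negF S A) (negF S B)
  | .fa x A => .exi x (negF S A)
  | .topN => .botP
  | .botN => .topP

/-- (Naive) substitution of a term for a variable in a formula. -/
noncomputable def substF (S : LitStr V Tm Lit) (x : V) (t : Tm) : PForm V Lit → PForm V Lit
  | .lit l => .lit (S.substL l x t)
  | .andP A B => .andP (substF S x t A) (substF S x t B)
  | .orP A B => .orP (substF S x t A) (substF S x t B)
  | .exi y A => if y = x then .exi y A else .exi y (substF S x t A)
  | .topP => .topP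
  | .botP => .botP
  | .andN A B => .andN (substF S x t A) (substF S x t B)
  | .orN A B => .orN (substF S x t A) (substF S x t B)
  | .fa y A => if y = x then .fa y A else .fa y (substF S x t A)
  | .topN => .topN
  | .botN => .botN

/-- Free variables of a formula. -/
def fvF (S : LitStr V Tm Lit) : PForm V Lit → Set V
  | .lit l => S.fvL l
  | .andP A B => fvF S A ∪ fvF S B
  | .orP A B => fvF S A ∪ fvF S B
  | .exi y A => fvF S A \ {y}
  | .topP => ∅
  | .botP => ∅
  | .andN A B => fvF S A ∪ fvF S B
  | .orN A B => fvF S A ∪ fvF S B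
  | .fa y A => fvF S A \ {y}
  | .topN => ∅
  | .botN => ∅

/-- `P`-positive formulae. -/
def IsPos (P : Set Lit) : PForm V Lit → Prop
  | .lit l => l ∈ P
  | .andP _ _ => True
  | .orP _ _ => True
  | .exi _ _ => True
  | .topP => True
  | .botP => True
  | _ => False

/-- `P`-negative formulae. -/
def IsNeg (S : LitStr V Tm Lit) (P : Set Lit) : PForm V Lit → Prop
  | .lit l => S.neg l ∈ P
  | .andN _ _ => True
  | .orN _ _ => True
  | .fa _ _ => True
  | .topN => True
  | .botN => True
  | _ => False

/-- The formula is a literal. -/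
def isLit : PForm V Lit → Prop := fun A => ∃ l, A = lit l

end PForm

variable {V Tm Lit : Type}

/-- Syntactical consistency of a set of literals. -/
def SynCons (S : LitStr V Tm Lit) (P : Set Lit) : Prop := ¬ ∃ l, l ∈ P ∧ S.neg l ∈ P

/-- `l` is `P`-unpolarised. -/
def UnpolLit (S : LitStr V Tm Lit) (P : Set Lit) (l : Lit) : Prop := l ∉ P ∧ S.neg l ∉ P

/-- `P⟨A⟩`: extend the polarisation set `P` with `A` when `A` is a `P`-unpolarised literal. -/
def polar (S : LitStr V Tm Lit) (P : Set Lit) (A : PForm V Lit) : Set Lit :=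
  P ∪ {m | A = PForm.lit m ∧ UnpolLit S P m}

/-- `Γ^P`: the `P`-positive literals occurring in `Γ` (as a set). -/
def posLits (P : Set Lit) (Γ : Multiset (PForm V Lit)) : Set Lit :=
  {l | l ∈ P ∧ PForm.lit l ∈ Γ}

/-- The literals occurring in `Γ` (as a set). -/
def litSet (Γ : Multiset (PForm V Lit)) : Set Lit := {l | PForm.lit l ∈ Γ}

/-- Negation of a multiset of formulae. -/
def negM (S : LitStr V Tm Lit) (Δ : Multiset (PForm V Lit)) : Multiset (PForm V Lit) :=
  Δ.map (PForm.negF S)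

/-- Free variables of a multiset of formulae. -/
def fvM (S : LitStr V Tm Lit) (Γ : Multiset (PForm V Lit)) : Set V :=
  {x | ∃ A ∈ Γ, x ∈ PForm.fvF S A}

/-- Free variables of a polarisation set. -/
def fvPol (S : LitStr V Tm Lit) (P : Set Lit) : Set V := {x | ∃ l ∈ P, x ∈ S.fvL l}

/-- An inconsistency predicate: basic inconsistency, upward closure (weakening),
cut-admissibility, and stability under instantiation. -/
structure InconsPred (S : LitStr V Tm Lit) (T : Set Lit → Prop) : Prop where
  basic : ∀ l : Lit, T {l, S.neg l}
  mono : ∀ ⦃A B : Set Lit⦄, A ⊆ B → T A → T B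
  cut : ∀ (A : Set Lit) (l : Lit), T (insert l A) → T (insert (S.neg l) A) → T A
  inst : ∀ (A : Set Lit) (x : V) (t : Tm), T A → T ((fun l => S.substL l x t) '' A)

/-- Syntactical inconsistency: the set contains some literal together with its negation. -/
def SynIncons (S : LitStr V Tm Lit) (A : Set Lit) : Prop := ∃ l, l ∈ A ∧ S.neg l ∈ A

mutual
  /-- Focused sequents `Γ ⊢ [P] A` of LK(T)p, with a height index. -/
  inductive DerPos (S : LitStr V Tm Lit) (T : Set Lit → Prop) :
      Multiset (PForm V Lit) → Set Lit → PForm V Lit → ℕ → Prop where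
    | andP {Γ P A B n m} : DerPos S T Γ P A n → DerPos S T Γ P B m →
        DerPos S T Γ P (.andP A B) (max n m + 1)
    | orP₁ {Γ P A B n} : DerPos S T Γ P A n → DerPos S T Γ P (.orP A B) (n + 1)
    | orP₂ {Γ P A B n} : DerPos S T Γ P B n → DerPos S T Γ P (.orP A B) (n + 1)
    | exi {Γ P x t A n} : DerPos S T Γ P (PForm.substF S x t A) n →
        DerPos S T Γ P (.exi x A) (n + 1)
    | topP {Γ P} : DerPos S T Γ P .topP 0
    | init1 {Γ P l} : l ∈ P → T (posLits P Γ ∪ {S.neg l}) → DerPos S T Γ P (.lit l) 0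
    | release {Γ P N n} : ¬ PForm.IsPos P N → DerNeg S T Γ P {N} n →
        DerPos S T Γ P N (n + 1)

  /-- Unfocused sequents `Γ ⊢ [P] Δ` of LK(T)p, with a height index. -/
  inductive DerNeg (S : LitStr V Tm Lit) (T : Set Lit → Prop) :
      Multiset (PForm V Lit) → Set Lit → Multiset (PForm V Lit) → ℕ → Prop where
    | andN {Γ P A B Δ n m} : DerNeg S T Γ P (A ::ₘ Δ) n → DerNeg S T Γ P (B ::ₘ Δ) m →
        DerNeg S T Γ P (.andN A B ::ₘ Δ) (max n m + 1)
    | orN {Γ P A B Δ n} : DerNeg S T Γ P (A ::ₘ B ::ₘ Δ) n →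
        DerNeg S T Γ P (.orN A B ::ₘ Δ) (n + 1)
    | fa {Γ P x A Δ n} : x ∉ fvM S Γ ∪ fvM S Δ ∪ fvPol S P →
        DerNeg S T Γ P (A ::ₘ Δ) n → DerNeg S T Γ P (.fa x A ::ₘ Δ) (n + 1)
    | botN {Γ P Δ n} : DerNeg S T Γ P Δ n → DerNeg S T Γ P (.botN ::ₘ Δ) (n + 1)
    | topN {Γ P Δ} : DerNeg S T Γ P (.topN ::ₘ Δ) 0
    | store {Γ P A Δ n} : (PForm.isLit A ∨ PForm.IsPos P A) →
        DerNeg S T (PForm.negF S A ::ₘ Γ) (polar S P (PForm.negF S A)) Δ n →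
        DerNeg S T Γ P (A ::ₘ Δ) (n + 1)
    | select {Γ P A n} : ¬ PForm.IsNeg S P A → PForm.negF S A ∈ Γ →
        DerPos S T Γ P A n → DerNeg S T Γ P 0 (n + 1)
    | init2 {Γ P} : T (posLits P Γ) → DerNeg S T Γ P 0 0
end

/-- Derivability of a focused sequent in LK(T)p. -/
def DerPosD (S : LitStr V Tm Lit) (T : Set Lit → Prop)
    (Γ : Multiset (PForm V Lit)) (P : Set Lit) (A : PForm V Lit) : Prop :=
  ∃ n, DerPos S T Γ P A n

/-- Derivability of an unfocused sequent in LK(T)p. -/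
def DerNegD (S : LitStr V Tm Lit) (T : Set Lit → Prop)
    (Γ : Multiset (PForm V Lit)) (P : Set Lit) (Δ : Multiset (PForm V Lit)) : Prop :=
  ∃ n, DerNeg S T Γ P Δ n

/-- Closure of a set of literals under all substitutions. -/
inductive ClSubst (S : LitStr V Tm Lit) (A : Set Lit) : Lit → Prop
  | base {l} : l ∈ A → ClSubst S A l
  | step {l} (x : V) (t : Tm) : ClSubst S A l → ClSubst S A (S.substL l x t)

/-- Safety of a pair `(Γ, P)`. -/
def Safe (S : LitStr V Tm Lit) (T : Set Lit → Prop)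
    (Γ : Multiset (PForm V Lit)) (P : Set Lit) : Prop :=
  ∀ Γ' : Multiset (PForm V Lit), Γ ≤ Γ' →
    ∀ R : Set Lit, ¬ T R →
      posLits P Γ' ⊆ R →
      R ⊆ posLits P Γ' ∪ {l | ClSubst S {m | UnpolLit S P m} l} →
      ∀ l ∈ P, T (R ∪ {S.neg l}) → T (posLits P Γ' ∪ {S.neg l})

/-- Free variables of an optional focus. -/
def fvO (S : LitStr V Tm Lit) : Option (PForm V Lit) → Set V
  | none => ∅
  | some A => PForm.fvF S A

/-- Sequents `Γ ⊢ [P] X ; Δ` of the relaxed system LK(T)ex. -/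
inductive DerEx (S : LitStr V Tm Lit) (T : Set Lit → Prop) :
    Multiset (PForm V Lit) → Set Lit → Option (PForm V Lit) → Multiset (PForm V Lit) → Prop where
  | andP {Γ P A B Δ} : DerEx S T Γ P (some A) Δ → DerEx S T Γ P (some B) Δ →
      DerEx S T Γ P (some (.andP A B)) Δ
  | orP₁ {Γ P A B Δ} : DerEx S T Γ P (some A) Δ → DerEx S T Γ P (some (.orP A B)) Δ
  | orP₂ {Γ P A B Δ} : DerEx S T Γ P (some B) Δ → DerEx S T Γ P (some (.orP A B)) Δ
  | exi {Γ P x t A Δ} : DerEx S T Γ P (some (PForm.substF S x t A)) Δ →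
      DerEx S T Γ P (some (.exi x A)) Δ
  | topP {Γ P Δ} : DerEx S T Γ P (some .topP) Δ
  | init1 {Γ P l Δ} : l ∈ P → T (posLits P Γ ∪ {S.neg l} ∪ litSet (negM S Δ)) →
      DerEx S T Γ P (some (.lit l)) Δ
  | release {Γ P N} : ¬ PForm.IsPos P N → DerEx S T Γ P none {N} →
      DerEx S T Γ P (some N) 0
  | andN {Γ P X A B Δ} : DerEx S T Γ P X (A ::ₘ Δ) → DerEx S T Γ P X (B ::ₘ Δ) →
      DerEx S T Γ P X (.andN A B ::ₘ Δ)
  | orN {Γ P X A B Δ} : DerEx S T Γ P X (A ::ₘ B ::ₘ Δ) →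
      DerEx S T Γ P X (.orN A B ::ₘ Δ)
  | fa {Γ P X x A Δ} : x ∉ fvM S Γ ∪ fvM S Δ ∪ fvPol S P ∪ fvO S X →
      DerEx S T Γ P X (A ::ₘ Δ) → DerEx S T Γ P X (.fa x A ::ₘ Δ)
  | botN {Γ P X Δ} : DerEx S T Γ P X Δ → DerEx S T Γ P X (.botN ::ₘ Δ)
  | topN {Γ P X Δ} : DerEx S T Γ P X (.topN ::ₘ Δ)
  | store {Γ P X A Δ} : (PForm.isLit A ∨ PForm.IsPos P A) →
      DerEx S T (PForm.negF S A ::ₘ Γ) (polar S P (PForm.negF S A)) X Δ →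
      DerEx S T Γ P X (A ::ₘ Δ)
  | select {Γ P A Δ} : ¬ PForm.IsNeg S P A → PForm.negF S A ∈ Γ →
      DerEx S T Γ P (some A) Δ → DerEx S T Γ P none Δ
  | init2 {Γ P Δ} : T (posLits P Γ ∪ litSet (negM S Δ)) → DerEx S T Γ P none Δ

/-- With the empty theory (semantical inconsistency = syntactical inconsistency) and in
propositional logic (substitution acts trivially on literals), every pair `(Γ, P)` is safe. -/
theorem safe_empty_theory_propositional {V Tm Lit : Type} (S : LitStr V Tm Lit)
    (hprop : ∀ (l : Lit) (x : V) (t : Tm), S.substL l x t = l)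
    (Γ : Multiset (PForm V Lit)) (P : Set Lit) :
    Safe S (SynIncons S) Γ P := by
  intro Γ' _ R hRcons hsub hsup l hlP hT
  -- ClSubst over unpolarised literals is just the unpolarised literals (propositional case)
  have hcl : ∀ m, ClSubst S {m | UnpolLit S P m} m → UnpolLit S P m := by
    intro m hm
    induction hm with
    | base h => exact h
    | step x t _ ih => rw [hprop]; exact ih
  have hlR : ∀ m ∈ R, m ∈ P → m ∈ posLits P Γ' := by
    intro m hmR hmP
    rcases hsup hmR with h | h
    · exact h
    · exact absurd hmP (hcl m h).1
  obtain ⟨m, hm1, hm2⟩ := hT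
  rcases hm1 with hm1 | hm1
  · rcases hm2 with hm2 | hm2
    · exact absurd ⟨m, hm1, hm2⟩ hRcons
    · -- neg m = neg l hence m = l
      have hml : m = l := by
        have := congrArg S.neg hm2
        rwa [S.neg_invol, S.neg_invol] at this
      subst hml
      exact ⟨m, Or.inl (hlR m hm1 hlP), Or.inr rfl⟩
  · rcases hm2 with hm2 | hm2
    · -- m = neg l, neg m = l ∈ R
      have hlR' : l ∈ R := by rwa [hm1, S.neg_invol] at hm2
      exact ⟨l, Or.inl (hlR l hlR' hlP), Or.inr rfl⟩
    · rw [hm1, S.neg_invol] at hm2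
      exact absurd hm2.symm (S.neg_ne l)
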